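/- arXiv:1504.06329 — 5 statements merged into one kernel-verified Lean document; each statement's English description precedes it below -/
import Mathlib

section
/- Let a, b, c, d be nonnegative real numbers with 2a+b+c > 0 and (a+b)(b+d)+(a+c)(c+d) > 0. Define F = 2a/(2a+b+c) and K = 2(ad−bc)/((a+b)(b+d)+(a+c)(c+d)). If ad−bc ≥ 0, then F ≥ K. -/
theorem F_ge_K (a b c d : ℝ) (ha : 0 ≤ a) (hb : 0 ≤ b) (hc : 0 ≤ c) (hd : 0 ≤ d)
    (h1 : 0 < 2*a + b + c) (h2 : 0 < (a+b)*(b+d) + (a+c)*(c+d))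
    (hdet : 0 ≤ a*d - b*c) :
    2*(a*d - b*c) / ((a+b)*(b+d) + (a+c)*(c+d)) ≤ 2*a / (2*a + b + c) := by
  rw [div_le_div_iff₀ h2 h1]
  nlinarith [mul_nonneg hb hc, mul_nonneg ha hd, mul_nonneg hb hb, mul_nonneg hc hc,
    mul_nonneg (mul_nonneg ha hb) hc, mul_nonneg (mul_nonneg ha hc) hc,
    mul_nonneg (mul_nonneg ha hb) hb, mul_nonneg (mul_nonneg hb hc) hc,
    mul_nonneg (mul_nonneg hb hb) hc, mul_nonneg (mul_nonneg ha ha) hb,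
    mul_nonneg (mul_nonneg ha ha) hc, mul_nonneg (mul_nonneg hb hc) hd,
    mul_nonneg hdet hb, mul_nonneg hdet hc, mul_nonneg hdet ha]
end

section
/- Let a₁, b₁, c₁, d₁, a₋₁, b₋₁, c₋₁, d₋₁ be nonnegative real numbers. Set b = b₁+b₋₁, c = c₁+c₋₁, g = 2(a₁+c₁)+b₁+d₁+a₋₁+c₋₁, h = 2(a₁+b₁)+c₁+d₁+a₋₁+b₋₁, and assume g > 0 and h > 0. Define F̃_t = 2(a₁+c₁)/g, F̃_{t−1} = 2(a₁+b₁)/h, and ΔF = F̃_t − F̃_{t−1}. Then |ΔF| ≤ 2(b+c)/g. -/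
theorem deltaF_le_two_bc_div_g (a1 b1 c1 d1 am1 bm1 cm1 dm1 : ℝ)
    (ha1 : 0 ≤ a1) (hb1 : 0 ≤ b1) (hc1 : 0 ≤ c1) (hd1 : 0 ≤ d1)
    (ham1 : 0 ≤ am1) (hbm1 : 0 ≤ bm1) (hcm1 : 0 ≤ cm1) (hdm1 : 0 ≤ dm1)
    (hg : 0 < 2*(a1+c1) + b1 + d1 + am1 + cm1)
    (hh : 0 < 2*(a1+b1) + c1 + d1 + am1 + bm1) :
    |2*(a1+c1) / (2*(a1+c1) + b1 + d1 + am1 + cm1)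
      - 2*(a1+b1) / (2*(a1+b1) + c1 + d1 + am1 + bm1)|
    ≤ 2*((b1+bm1) + (c1+cm1)) / (2*(a1+c1) + b1 + d1 + am1 + cm1) := by
  set g := 2*(a1+c1) + b1 + d1 + am1 + cm1 with hgdef
  set h := 2*(a1+b1) + c1 + d1 + am1 + bm1 with hhdef
  have hgh : 0 < g * h := mul_pos hg hh
  have key : |2*(a1+c1)*h - 2*(a1+b1)*g| ≤ 2*((b1+bm1) + (c1+cm1))*h := by
    rw [abs_le]
    constructor <;>
    · simp only [hgdef, hhdef]
      nlinarith [mul_nonneg ha1 hb1, mul_nonneg ha1 hc1, mul_nonneg ha1 hbm1,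
        mul_nonneg ha1 hcm1, mul_nonneg hb1 hc1, mul_nonneg hb1 hbm1,
        mul_nonneg hb1 hcm1, mul_nonneg hc1 hbm1, mul_nonneg hc1 hcm1,
        mul_nonneg hbm1 hcm1, mul_nonneg hd1 hb1, mul_nonneg hd1 hc1,
        mul_nonneg hd1 hbm1, mul_nonneg hd1 hcm1, mul_nonneg ham1 hb1,
        mul_nonneg ham1 hc1, mul_nonneg ham1 hbm1, mul_nonneg ham1 hcm1,
        mul_nonneg ha1 hd1, mul_nonneg ha1 ham1, sq_nonneg (b1 - c1),
        sq_nonneg (b1 + c1), mul_nonneg hb1 hb1, mul_nonneg hc1 hc1]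
  calc |2*(a1+c1) / g - 2*(a1+b1) / h|
      = |2*(a1+c1)*h - 2*(a1+b1)*g| / (g*h) := by
        rw [div_sub_div _ _ hg.ne' hh.ne', abs_div, abs_of_pos hgh]
        ring_nf
    _ ≤ 2*((b1+bm1) + (c1+cm1))*h / (g*h) := by
        gcongr
    _ = 2*((b1+bm1) + (c1+cm1)) / g := by
        rw [mul_comm g h, ← div_div, mul_div_assoc, div_self hh.ne', mul_one]
end

section
/- Let a₁, b₁, c₁, d₁, a₋₁, b₋₁, c₋₁, d₋₁ be nonnegative real numbers, and set a = a₁+a₋₁, b = b₁+b₋₁, c = c₁+c₋₁, d = d₁+d₋₁, g = 2(a₁+c₁)+b₁+d₁+a₋₁+c₋₁, h = 2(a₁+b₁)+c₁+d₁+a₋₁+b₋₁. Assume g > 0, h > 0, 2a+b+c > 0, and (a+b)(b+d)+(a+c)(c+d) > 0. Define K = 2(ad−bc)/((a+b)(b+d)+(a+c)(c+d)), F̃_t = 2(a₁+c₁)/g, F̃_{t−1} = 2(a₁+b₁)/h, and ΔF = F̃_t − F̃_{t−1}. Let T > 0. If K > T, then |ΔF| ≤ (4(1−T)/T)·(a/g).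 -/
private lemma kappa_bc_aux (A B C D T : ℝ) (hA : 0 ≤ A) (hB : 0 ≤ B) (hC : 0 ≤ C)
    (hD : 0 ≤ D) (hT : 0 < T) (hN : 0 < A + B + C + D)
    (h2 : 0 < (A+B)*(B+D) + (A+C)*(C+D))
    (hKD : T * ((A+B)*(B+D) + (A+C)*(C+D)) < 2*(A*D - B*C)) :
    T * (B + C) ≤ 2*A*(1-T) := by
  have hid : (B + C) * (A + B + C + D) < (1 - T) * ((A+B)*(B+D) + (A+C)*(C+D)) := by
    nlinarith
  have hT1 : (0:ℝ) ≤ 1 - T := by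
    nlinarith [mul_nonneg (by linarith : (0:ℝ) ≤ B + C) hN.le]
  have c2 : (1-T) * (2*(A*D - B*C)) ≤ (2*A*(1-T)) * (A + B + C + D) := by
    nlinarith [mul_nonneg hT1 (mul_nonneg hB hC),
      mul_nonneg (mul_nonneg hT1 hA) (by linarith : (0:ℝ) ≤ A + B + C)]
  have c3 : (T * (B + C)) * (A + B + C + D) < (2*A*(1-T)) * (A + B + C + D) := by
    calc (T * (B + C)) * (A + B + C + D) = T * ((B + C) * (A + B + C + D)) := by ring
      _ < T * ((1 - T) * ((A+B)*(B+D) + (A+C)*(C+D))) := mul_lt_mul_of_pos_left hid hT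
      _ = (1-T) * (T * ((A+B)*(B+D) + (A+C)*(C+D))) := by ring
      _ ≤ (1-T) * (2*(A*D - B*C)) := mul_le_mul_of_nonneg_left hKD.le hT1
      _ ≤ _ := c2
  exact (lt_of_mul_lt_mul_right c3 hN.le).le

private lemma num_bound_aux (a1 b1 c1 am1 bm1 cm1 g h : ℝ)
    (hb1 : 0 ≤ b1) (hc1 : 0 ≤ c1) (hbm1 : 0 ≤ bm1) (hcm1 : 0 ≤ cm1)
    (hh : 0 < h) (hu : 0 ≤ 2*(a1+b1)) (hu2 : 0 ≤ 2*h - 2*(a1+b1))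
    (hgh : g = h - ((b1+bm1) - (c1+cm1))) :
    |2*(a1+c1)*h - 2*(a1+b1)*g| ≤ 2*((b1+bm1)+(c1+cm1))*h := by
  subst hgh
  rcases abs_cases (2*(a1+c1)*h - 2*(a1+b1)*(h - ((b1+bm1) - (c1+cm1)))) with ⟨he, _⟩ | ⟨he, _⟩ <;>
      rw [he]
  · nlinarith [mul_nonneg hu2 hb1, mul_nonneg hu2 hbm1, mul_nonneg hu hc1,
      mul_nonneg hu hcm1, mul_nonneg hh.le hb1, mul_nonneg hh.le hcm1]
  · nlinarith [mul_nonneg hu hb1, mul_nonneg hu hbm1, mul_nonneg hu2 hc1,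
      mul_nonneg hu2 hcm1, mul_nonneg hh.le hc1, mul_nonneg hh.le hbm1]

theorem deltaF_bound_with_a_over_g (a1 b1 c1 d1 am1 bm1 cm1 dm1 T : ℝ)
    (ha1 : 0 ≤ a1) (hb1 : 0 ≤ b1) (hc1 : 0 ≤ c1) (hd1 : 0 ≤ d1)
    (ham1 : 0 ≤ am1) (hbm1 : 0 ≤ bm1) (hcm1 : 0 ≤ cm1) (hdm1 : 0 ≤ dm1)
    (hg : 0 < 2*(a1+c1) + b1 + d1 + am1 + cm1)
    (hh : 0 < 2*(a1+b1) + c1 + d1 + am1 + bm1)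
    (h1 : 0 < 2*(a1+am1) + (b1+bm1) + (c1+cm1))
    (h2 : 0 < ((a1+am1)+(b1+bm1))*((b1+bm1)+(d1+dm1))
            + ((a1+am1)+(c1+cm1))*((c1+cm1)+(d1+dm1)))
    (hT : 0 < T)
    (hK : T < 2*((a1+am1)*(d1+dm1) - (b1+bm1)*(c1+cm1))
            / (((a1+am1)+(b1+bm1))*((b1+bm1)+(d1+dm1))
               + ((a1+am1)+(c1+cm1))*((c1+cm1)+(d1+dm1)))) :
    |2*(a1+c1) / (2*(a1+c1) + b1 + d1 + am1 + cm1)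
      - 2*(a1+b1) / (2*(a1+b1) + c1 + d1 + am1 + bm1)|
    ≤ (4*(1-T)/T) * ((a1+am1) / (2*(a1+c1) + b1 + d1 + am1 + cm1)) := by
  set g := 2*(a1+c1) + b1 + d1 + am1 + cm1 with hgdef
  set h := 2*(a1+b1) + c1 + d1 + am1 + bm1 with hhdef
  have hKD : T * (((a1+am1)+(b1+bm1))*((b1+bm1)+(d1+dm1))
               + ((a1+am1)+(c1+cm1))*((c1+cm1)+(d1+dm1)))
      < 2*((a1+am1)*(d1+dm1) - (b1+bm1)*(c1+cm1)) :=
    (lt_div_iff₀ h2).mp hK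
  have hN : 0 < (a1+am1) + (b1+bm1) + (c1+cm1) + (d1+dm1) := by
    have := hdm1; have := hd1; linarith
  have hbc : T * ((b1+bm1)+(c1+cm1)) ≤ 2*(a1+am1)*(1-T) :=
    kappa_bc_aux _ _ _ _ T (by linarith) (by linarith) (by linarith) (by linarith)
      hT hN h2 hKD
  have hnum : |2*(a1+c1)*h - 2*(a1+b1)*g| ≤ 2*((b1+bm1)+(c1+cm1))*h :=
    num_bound_aux a1 b1 c1 am1 bm1 cm1 g h hb1 hc1 hbm1 hcm1 hh
      (by linarith) (by rw [hhdef]; linarith) (by rw [hgdef, hhdef]; ring)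
  have key : |2*(a1+c1) / g - 2*(a1+b1) / h| ≤ 2*((b1+bm1)+(c1+cm1)) / g := by
    rw [div_sub_div _ _ hg.ne' hh.ne', abs_div, abs_of_pos (mul_pos hg hh),
      div_le_div_iff₀ (mul_pos hg hh) hg,
      show 2*(a1+c1)*h - g*(2*(a1+b1)) = 2*(a1+c1)*h - 2*(a1+b1)*g from by ring]
    calc |2*(a1+c1)*h - 2*(a1+b1)*g| * g ≤ (2*((b1+bm1)+(c1+cm1))*h) * g :=
          mul_le_mul_of_nonneg_right hnum hg.le
      _ = 2*((b1+bm1)+(c1+cm1)) * (g*h) := by ring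
  refine key.trans ?_
  rw [show (4*(1-T)/T) * ((a1+am1)/g) = (4*(1-T)/T*(a1+am1))/g by ring]
  rw [div_le_div_iff_of_pos_right hg, div_mul_eq_mul_div, le_div_iff₀ hT]
  linarith [hbc]
end

section
/- Let a₁, b₁, c₁, d₁, a₋₁, b₋₁, c₋₁, d₋₁ be nonnegative real numbers with a₋₁ = 0, and set a = a₁+a₋₁, b = b₁+b₋₁, c = c₁+c₋₁, d = d₁+d₋₁, g = 2(a₁+c₁)+b₁+d₁+a₋₁+c₋₁, h = 2(a₁+b₁)+c₁+d₁+a₋₁+b₋₁. Assume g > 0, h > 0, 2a+b+c > 0, and (a+b)(b+d)+(a+c)(c+d) > 0. Define K = 2(ad−bc)/((a+b)(b+d)+(a+c)(c+d)), F̃_t = 2(a₁+c₁)/g, F̃_{t−1} = 2(a₁+b₁)/h, and ΔF = F̃_t − F̃_{t−1}. Let T > 0. If K > T, then |ΔF| ≤ 2(1−T)/T. -/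
theorem deltaF_bound_perfect_precision (a1 b1 c1 d1 am1 bm1 cm1 dm1 T : ℝ)
    (ha1 : 0 ≤ a1) (hb1 : 0 ≤ b1) (hc1 : 0 ≤ c1) (hd1 : 0 ≤ d1)
    (ham1 : 0 ≤ am1) (hbm1 : 0 ≤ bm1) (hcm1 : 0 ≤ cm1) (hdm1 : 0 ≤ dm1)
    (ham1zero : am1 = 0)
    (hg : 0 < 2*(a1+c1) + b1 + d1 + am1 + cm1)
    (hh : 0 < 2*(a1+b1) + c1 + d1 + am1 + bm1)
    (h1 : 0 < 2*(a1+am1) + (b1+bm1) + (c1+cm1))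
    (h2 : 0 < ((a1+am1)+(b1+bm1))*((b1+bm1)+(d1+dm1))
            + ((a1+am1)+(c1+cm1))*((c1+cm1)+(d1+dm1)))
    (hT : 0 < T)
    (hK : T < 2*((a1+am1)*(d1+dm1) - (b1+bm1)*(c1+cm1))
            / (((a1+am1)+(b1+bm1))*((b1+bm1)+(d1+dm1))
               + ((a1+am1)+(c1+cm1))*((c1+cm1)+(d1+dm1)))) :
    |2*(a1+c1) / (2*(a1+c1) + b1 + d1 + am1 + cm1)
      - 2*(a1+b1) / (2*(a1+b1) + c1 + d1 + am1 + bm1)|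
    ≤ 2*(1-T)/T := by
  subst ham1zero
  set G : ℝ := 2*(a1+c1) + b1 + d1 + 0 + cm1 with hGdef
  set H : ℝ := 2*(a1+b1) + c1 + d1 + 0 + bm1 with hHdef
  set D : ℝ := ((a1+0)+(b1+bm1))*((b1+bm1)+(d1+dm1))
            + ((a1+0)+(c1+cm1))*((c1+cm1)+(d1+dm1)) with hDdef
  set N : ℝ := 2*((a1+0)*(d1+dm1) - (b1+bm1)*(c1+cm1)) with hNdef
  clear_value D N
  have hGH : (0:ℝ) < G * H := mul_pos hg hh
  have hTD : T * D ≤ N := le_of_lt ((lt_div_iff₀ h2).mp hK)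
  rw [div_sub_div _ _ (ne_of_gt hg) (ne_of_gt hh), abs_div,
    abs_of_pos hGH, div_le_div_iff₀ hGH hT]
  set M : ℝ := 2*(a1+c1) * H - G * (2*(a1+b1)) with hMdef
  clear_value M
  -- key monomial nonnegativity hints
  have hints : True := trivial
  have hxMub : a1 * M ≤ (b1+c1+bm1+cm1)*(G*H) := by
    rw [hMdef, hGdef, hHdef]
    set_option maxHeartbeats 2000000 in
    linarith [(mul_nonneg (mul_nonneg hbm1 hbm1) hcm1),
      (mul_nonneg (mul_nonneg hbm1 hcm1) hcm1),
      (mul_nonneg (mul_nonneg hd1 hbm1) hbm1),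
      (mul_nonneg (mul_nonneg hd1 hbm1) hcm1),
      (mul_nonneg (mul_nonneg hd1 hcm1) hcm1),
      (mul_nonneg (mul_nonneg hd1 hd1) hbm1),
      (mul_nonneg (mul_nonneg hd1 hd1) hcm1),
      (mul_nonneg (mul_nonneg ha1 hbm1) hbm1),
      (mul_nonneg (mul_nonneg ha1 hbm1) hcm1),
      (mul_nonneg (mul_nonneg ha1 hcm1) hcm1),
      (mul_nonneg (mul_nonneg ha1 hd1) hbm1),
      (mul_nonneg (mul_nonneg ha1 hd1) hcm1),
      (mul_nonneg (mul_nonneg ha1 ha1) hbm1),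
      (mul_nonneg (mul_nonneg ha1 ha1) hcm1),
      (mul_nonneg (mul_nonneg ha1 ha1) hb1),
      (mul_nonneg (mul_nonneg ha1 ha1) hc1),
      (mul_nonneg (mul_nonneg ha1 hb1) hbm1),
      (mul_nonneg (mul_nonneg ha1 hb1) hcm1),
      (mul_nonneg (mul_nonneg ha1 hb1) hd1),
      (mul_nonneg (mul_nonneg ha1 hb1) hb1),
      (mul_nonneg (mul_nonneg ha1 hb1) hc1),
      (mul_nonneg (mul_nonneg ha1 hc1) hbm1),
      (mul_nonneg (mul_nonneg ha1 hc1) hcm1),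
      (mul_nonneg (mul_nonneg ha1 hc1) hd1),
      (mul_nonneg (mul_nonneg ha1 hc1) hc1),
      (mul_nonneg (mul_nonneg hb1 hbm1) hbm1),
      (mul_nonneg (mul_nonneg hb1 hbm1) hcm1),
      (mul_nonneg (mul_nonneg hb1 hcm1) hcm1),
      (mul_nonneg (mul_nonneg hb1 hd1) hbm1),
      (mul_nonneg (mul_nonneg hb1 hd1) hcm1),
      (mul_nonneg (mul_nonneg hb1 hd1) hd1),
      (mul_nonneg (mul_nonneg hb1 hb1) hbm1),
      (mul_nonneg (mul_nonneg hb1 hb1) hcm1),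
      (mul_nonneg (mul_nonneg hb1 hb1) hd1),
      (mul_nonneg (mul_nonneg hb1 hb1) hb1),
      (mul_nonneg (mul_nonneg hb1 hb1) hc1),
      (mul_nonneg (mul_nonneg hb1 hc1) hbm1),
      (mul_nonneg (mul_nonneg hb1 hc1) hcm1),
      (mul_nonneg (mul_nonneg hb1 hc1) hd1),
      (mul_nonneg (mul_nonneg hb1 hc1) hc1),
      (mul_nonneg (mul_nonneg hc1 hbm1) hbm1),
      (mul_nonneg (mul_nonneg hc1 hbm1) hcm1),
      (mul_nonneg (mul_nonneg hc1 hcm1) hcm1),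
      (mul_nonneg (mul_nonneg hc1 hd1) hbm1),
      (mul_nonneg (mul_nonneg hc1 hd1) hcm1),
      (mul_nonneg (mul_nonneg hc1 hd1) hd1),
      (mul_nonneg (mul_nonneg hc1 hc1) hbm1),
      (mul_nonneg (mul_nonneg hc1 hc1) hcm1),
      (mul_nonneg (mul_nonneg hc1 hc1) hd1),
      (mul_nonneg (mul_nonneg hc1 hc1) hc1)]
  have hxMlb : -((b1+c1+bm1+cm1)*(G*H)) ≤ a1 * M := by
    rw [hMdef, hGdef, hHdef]
    set_option maxHeartbeats 2000000 in
    linarith [(mul_nonneg (mul_nonneg hbm1 hbm1) hcm1),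
      (mul_nonneg (mul_nonneg hbm1 hcm1) hcm1),
      (mul_nonneg (mul_nonneg hd1 hbm1) hbm1),
      (mul_nonneg (mul_nonneg hd1 hbm1) hcm1),
      (mul_nonneg (mul_nonneg hd1 hcm1) hcm1),
      (mul_nonneg (mul_nonneg hd1 hd1) hbm1),
      (mul_nonneg (mul_nonneg hd1 hd1) hcm1),
      (mul_nonneg (mul_nonneg ha1 hbm1) hbm1),
      (mul_nonneg (mul_nonneg ha1 hbm1) hcm1),
      (mul_nonneg (mul_nonneg ha1 hcm1) hcm1),
      (mul_nonneg (mul_nonneg ha1 hd1) hbm1),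
      (mul_nonneg (mul_nonneg ha1 hd1) hcm1),
      (mul_nonneg (mul_nonneg ha1 ha1) hbm1),
      (mul_nonneg (mul_nonneg ha1 ha1) hcm1),
      (mul_nonneg (mul_nonneg ha1 ha1) hb1),
      (mul_nonneg (mul_nonneg ha1 ha1) hc1),
      (mul_nonneg (mul_nonneg ha1 hb1) hbm1),
      (mul_nonneg (mul_nonneg ha1 hb1) hcm1),
      (mul_nonneg (mul_nonneg ha1 hb1) hd1),
      (mul_nonneg (mul_nonneg ha1 hb1) hb1),
      (mul_nonneg (mul_nonneg ha1 hb1) hc1),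
      (mul_nonneg (mul_nonneg ha1 hc1) hbm1),
      (mul_nonneg (mul_nonneg ha1 hc1) hcm1),
      (mul_nonneg (mul_nonneg ha1 hc1) hd1),
      (mul_nonneg (mul_nonneg ha1 hc1) hc1),
      (mul_nonneg (mul_nonneg hb1 hbm1) hbm1),
      (mul_nonneg (mul_nonneg hb1 hbm1) hcm1),
      (mul_nonneg (mul_nonneg hb1 hcm1) hcm1),
      (mul_nonneg (mul_nonneg hb1 hd1) hbm1),
      (mul_nonneg (mul_nonneg hb1 hd1) hcm1),
      (mul_nonneg (mul_nonneg hb1 hd1) hd1),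
      (mul_nonneg (mul_nonneg hb1 hb1) hbm1),
      (mul_nonneg (mul_nonneg hb1 hb1) hcm1),
      (mul_nonneg (mul_nonneg hb1 hb1) hd1),
      (mul_nonneg (mul_nonneg hb1 hb1) hb1),
      (mul_nonneg (mul_nonneg hb1 hb1) hc1),
      (mul_nonneg (mul_nonneg hb1 hc1) hbm1),
      (mul_nonneg (mul_nonneg hb1 hc1) hcm1),
      (mul_nonneg (mul_nonneg hb1 hc1) hd1),
      (mul_nonneg (mul_nonneg hb1 hc1) hc1),
      (mul_nonneg (mul_nonneg hc1 hbm1) hbm1),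
      (mul_nonneg (mul_nonneg hc1 hbm1) hcm1),
      (mul_nonneg (mul_nonneg hc1 hcm1) hcm1),
      (mul_nonneg (mul_nonneg hc1 hd1) hbm1),
      (mul_nonneg (mul_nonneg hc1 hd1) hcm1),
      (mul_nonneg (mul_nonneg hc1 hd1) hd1),
      (mul_nonneg (mul_nonneg hc1 hc1) hbm1),
      (mul_nonneg (mul_nonneg hc1 hc1) hcm1),
      (mul_nonneg (mul_nonneg hc1 hc1) hd1),
      (mul_nonneg (mul_nonneg hc1 hc1) hc1)]
  have hN2 : N ≤ 2*a1*(d1+dm1) := by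
    rw [hNdef]
    nlinarith [mul_nonneg (add_nonneg hb1 hbm1) (add_nonneg hc1 hcm1)]
  have key : N * |M| ≤ 2*(b1+c1+bm1+cm1)*((a1+b1+c1+d1+bm1+cm1+dm1)*(G*H)) := by
    have t3 : 0 ≤ (2*(a1+b1+c1+bm1+cm1)) * ((b1+c1+bm1+cm1)*(G*H)) :=
      mul_nonneg (by linarith) (mul_nonneg (by linarith) hGH.le)
    rcases abs_cases M with ⟨hM1, hM2⟩ | ⟨hM1, hM2⟩ <;> rw [hM1]
    · have t1 : 0 ≤ (2*a1*(d1+dm1) - N) * M :=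
        mul_nonneg (by linarith) hM2
      have t2 : 0 ≤ (2*(d1+dm1)) * ((b1+c1+bm1+cm1)*(G*H) - a1*M) :=
        mul_nonneg (by linarith) (by linarith)
      linarith [t1, t2, t3]
    · have t1 : 0 ≤ (2*a1*(d1+dm1) - N) * (-M) :=
        mul_nonneg (by linarith) (by linarith)
      have t2 : 0 ≤ (2*(d1+dm1)) * ((b1+c1+bm1+cm1)*(G*H) + a1*M) :=
        mul_nonneg (by linarith) (by linarith)
      linarith [t1, t2, t3]
  have hDN : 2*(b1+c1+bm1+cm1)*((a1+b1+c1+d1+bm1+cm1+dm1)*(G*H))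
      = (2*D - 2*N)*(G*H) := by
    rw [hDdef, hNdef]; ring
  have c3 : (2*D - 2*N)*(G*H) ≤ 2*(1-T)*D*(G*H) :=
    mul_le_mul_of_nonneg_right (by linarith [hTD]) hGH.le
  have c1' : T*D*|M| ≤ N*|M| := mul_le_mul_of_nonneg_right hTD (abs_nonneg M)
  have h5 : D*(T*|M|) ≤ D*(2*(1-T)*(G*H)) := by linarith [c1', key, hDN, c3]
  have c4 : T*|M| ≤ 2*(1-T)*(G*H) := le_of_mul_le_mul_left h5 h2
  linarith [c4]
end

section
/- Let a₁, b₁, c₁, d₁, a₋₁, b₋₁, c₋₁, d₋₁ be nonnegative real numbers, let p ∈ (0,1), and set a = a₁+a₋₁, b = b₁+b₋₁, c = c₁+c₋₁, d = d₁+d₋₁, g = 2(a₁+c₁)+b₁+d₁+a₋₁+c₋₁, h = 2(a₁+b₁)+c₁+d₁+a₋₁+b₋₁. Assume g > 0, h > 0, 2a+b+c > 0, (a+b)(b+d)+(a+c)(c+d) > 0, a > 0, and a₁/(a₁+a₋₁) = p. Define K = 2(ad−bc)/((a+b)(b+d)+(a+c)(c+d)), F̃_t = 2(a₁+c₁)/g,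 F̃_{t−1} = 2(a₁+b₁)/h, and ΔF = F̃_t − F̃_{t−1}. Let T > 0. If K > T, then |ΔF| ≤ 4(1−T)/((p+1)T). -/
/-!
With a = a₁ + a₋₁ and so on, both F-measures have denominator at least 2a₁ + a₋₁ = (p + 1)a,
and the two models disagree on only b + c examples, so |ΔF| ≤ 2(b + c)/((p + 1)a).
On the Kappa side, 1 − K = (b + c)(a + b + c + d)/D while K ≤ 2ad/D, whence
(b + c)K ≤ 2a(1 − K); for K ≥ T > 0 this gives (b + c)T ≤ 2a(1 − T).
-/

noncomputable def cohenKappa (a b c d : ℝ) : ℝ :=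
  2 * (a * d - b * c) / ((a + b) * (b + d) + (a + c) * (c + d))

lemma one_sub_cohenKappa {a b c d : ℝ} (hD : 0 < (a + b) * (b + d) + (a + c) * (c + d)) :
    1 - cohenKappa a b c d
      = (b + c) * (a + b + c + d) / ((a + b) * (b + d) + (a + c) * (c + d)) := by
  rw [cohenKappa, eq_div_iff hD.ne', sub_mul, div_mul_cancel₀ _ hD.ne']
  ring

lemma add_mul_cohenKappa_le {a b c d : ℝ} (ha : 0 ≤ a) (hb : 0 ≤ b) (hc : 0 ≤ c)
    (hD : 0 < (a + b) * (b + d) + (a + c) * (c + d)) :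
    (b + c) * cohenKappa a b c d ≤ 2 * a * (1 - cohenKappa a b c d) := by
  rw [one_sub_cohenKappa hD, cohenKappa, mul_div_assoc', mul_div_assoc',
    div_le_div_iff_of_pos_right hD]
  have hdet : a * d - b * c ≤ a * (a + b + c + d) := by nlinarith [mul_nonneg hb hc]
  nlinarith [mul_le_mul_of_nonneg_left hdet (add_nonneg hb hc)]

lemma add_mul_le_of_le_cohenKappa {a b c d T : ℝ} (ha : 0 ≤ a) (hb : 0 ≤ b) (hc : 0 ≤ c)
    (hD : 0 < (a + b) * (b + d) + (a + c) * (c + d)) (hT : 0 < T)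
    (hTK : T ≤ cohenKappa a b c d) :
    (b + c) * T ≤ 2 * a * (1 - T) := by
  have hK := add_mul_cohenKappa_le ha hb hc hD
  have hK0 : 0 < cohenKappa a b c d := hT.trans_le hTK
  refine le_of_mul_le_mul_right ?_ hK0
  nlinarith [mul_le_mul_of_nonneg_left hTK ha, mul_le_mul_of_nonneg_right hK hT.le]

lemma fMeasure_sub_le {a1 b1 c1 d1 am1 bm1 cm1 : ℝ}
    (ha1 : 0 ≤ a1) (hb1 : 0 ≤ b1) (hc1 : 0 ≤ c1) (hd1 : 0 ≤ d1)
    (ham1 : 0 ≤ am1) (hbm1 : 0 ≤ bm1) (hcm1 : 0 ≤ cm1) (hm : 0 < 2*a1 + am1) :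
    2*(a1+c1) / (2*(a1+c1) + b1 + d1 + am1 + cm1)
      - 2*(a1+b1) / (2*(a1+b1) + c1 + d1 + am1 + bm1)
      ≤ 2*((b1+bm1)+(c1+cm1)) / (2*a1 + am1) := by
  set g := 2*(a1+c1) + b1 + d1 + am1 + cm1
  set h := 2*(a1+b1) + c1 + d1 + am1 + bm1
  have hmg : 2*a1 + am1 ≤ g := by linarith
  have hg : 0 < g := hm.trans_le hmg
  have hh : 0 < h := by linarith
  have hnum : (a1+c1)*h - (a1+b1)*g ≤ ((b1+bm1)+(c1+cm1))*h := by
    have hslack : 0 ≤ c1*bm1 + b1*(a1+b1+d1+am1) + bm1*(d1+am1+bm1) + (a1+b1)*cm1 := by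
      positivity
    linear_combination hslack + mul_nonneg (add_nonneg hb1 hcm1) hh.le
      + mul_nonneg (add_nonneg hc1 hbm1) (by positivity : (0:ℝ) ≤ a1 + 2*b1)
  calc 2*(a1+c1) / g - 2*(a1+b1) / h ≤ 2*((b1+bm1)+(c1+cm1)) / g := by
        rw [div_sub_div _ _ hg.ne' hh.ne', div_le_div_iff₀ (mul_pos hg hh) hg]
        nlinarith [mul_le_mul_of_nonneg_left hnum hg.le]
    _ ≤ 2*((b1+bm1)+(c1+cm1)) / (2*a1 + am1) := by gcongr

lemma abs_fMeasure_sub_le {a1 b1 c1 d1 am1 bm1 cm1 : ℝ}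
    (ha1 : 0 ≤ a1) (hb1 : 0 ≤ b1) (hc1 : 0 ≤ c1) (hd1 : 0 ≤ d1)
    (ham1 : 0 ≤ am1) (hbm1 : 0 ≤ bm1) (hcm1 : 0 ≤ cm1) (hm : 0 < 2*a1 + am1) :
    |2*(a1+c1) / (2*(a1+c1) + b1 + d1 + am1 + cm1)
      - 2*(a1+b1) / (2*(a1+b1) + c1 + d1 + am1 + bm1)|
      ≤ 2*((b1+bm1)+(c1+cm1)) / (2*a1 + am1) := by
  refine abs_sub_le_iff.2 ⟨fMeasure_sub_le ha1 hb1 hc1 hd1 ham1 hbm1 hcm1 hm, ?_⟩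
  rw [add_comm (b1+bm1)]
  exact fMeasure_sub_le ha1 hc1 hb1 hd1 ham1 hcm1 hbm1 hm

theorem deltaF_bound_precision_p_general (a1 b1 c1 d1 am1 bm1 cm1 dm1 p T : ℝ)
    (ha1 : 0 ≤ a1) (hb1 : 0 ≤ b1) (hc1 : 0 ≤ c1) (hd1 : 0 ≤ d1)
    (ham1 : 0 ≤ am1) (hbm1 : 0 ≤ bm1) (hcm1 : 0 ≤ cm1)
    (h2 : 0 < ((a1+am1)+(b1+bm1))*((b1+bm1)+(d1+dm1))
            + ((a1+am1)+(c1+cm1))*((c1+cm1)+(d1+dm1)))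
    (ha : 0 < a1 + am1)
    (hprec : a1 / (a1 + am1) = p)
    (hT : 0 < T)
    (hK : T < 2*((a1+am1)*(d1+dm1) - (b1+bm1)*(c1+cm1))
            / (((a1+am1)+(b1+bm1))*((b1+bm1)+(d1+dm1))
               + ((a1+am1)+(c1+cm1))*((c1+cm1)+(d1+dm1)))) :
    |2*(a1+c1) / (2*(a1+c1) + b1 + d1 + am1 + cm1)
      - 2*(a1+b1) / (2*(a1+b1) + c1 + d1 + am1 + bm1)|
    ≤ 4*(1-T)/((p+1)*T) := by
  have hprec' : 2*a1 + am1 = (p+1) * (a1+am1) := by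
    rw [← hprec]; field_simp; ring
  have hm : 0 < 2*a1 + am1 := by linarith
  have hp : 0 < p + 1 := pos_of_mul_pos_left (hprec' ▸ hm) ha.le
  have hdisagree : ((b1+bm1)+(c1+cm1)) * T ≤ 2*(a1+am1)*(1-T) :=
    add_mul_le_of_le_cohenKappa (by positivity) (by positivity) (by positivity) h2 hT hK.le
  calc _ ≤ 2*((b1+bm1)+(c1+cm1)) / (2*a1 + am1) :=
        abs_fMeasure_sub_le ha1 hb1 hc1 hd1 ham1 hbm1 hcm1 hm
    _ = 2*((b1+bm1)+(c1+cm1)) / ((p+1)*(a1+am1)) := by rw [hprec']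
    _ ≤ 4*(1-T)/((p+1)*T) := by
        rw [div_le_div_iff₀ (by positivity) (by positivity)]
        nlinarith [mul_le_mul_of_nonneg_left hdisagree hp.le]

theorem deltaF_bound_precision_p (a1 b1 c1 d1 am1 bm1 cm1 dm1 p T : ℝ)
    (ha1 : 0 ≤ a1) (hb1 : 0 ≤ b1) (hc1 : 0 ≤ c1) (hd1 : 0 ≤ d1)
    (ham1 : 0 ≤ am1) (hbm1 : 0 ≤ bm1) (hcm1 : 0 ≤ cm1) (hdm1 : 0 ≤ dm1)
    (hp : p ∈ Set.Ioo (0:ℝ) 1)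
    (hg : 0 < 2*(a1+c1) + b1 + d1 + am1 + cm1)
    (hh : 0 < 2*(a1+b1) + c1 + d1 + am1 + bm1)
    (h1 : 0 < 2*(a1+am1) + (b1+bm1) + (c1+cm1))
    (h2 : 0 < ((a1+am1)+(b1+bm1))*((b1+bm1)+(d1+dm1))
            + ((a1+am1)+(c1+cm1))*((c1+cm1)+(d1+dm1)))
    (ha : 0 < a1 + am1)
    (hprec : a1 / (a1 + am1) = p)
    (hT : 0 < T)
    (hK : T < 2*((a1+am1)*(d1+dm1) - (b1+bm1)*(c1+cm1))
            / (((a1+am1)+(b1+bm1))*((b1+bm1)+(d1+dm1))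
               + ((a1+am1)+(c1+cm1))*((c1+cm1)+(d1+dm1)))) :
    |2*(a1+c1) / (2*(a1+c1) + b1 + d1 + am1 + cm1)
      - 2*(a1+b1) / (2*(a1+b1) + c1 + d1 + am1 + bm1)|
    ≤ 4*(1-T)/((p+1)*T) :=
  deltaF_bound_precision_p_general a1 b1 c1 d1 am1 bm1 cm1 dm1 p T ha1 hb1 hc1 hd1 ham1 hbm1 hcm1 h2
    ha hprec hT hK
end
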